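/- Define operators on complex sequences f : ℕ → ℂ by: (F⁺f)(n) = (1/2)(1+(−1)^{n−1})·f(n−1), (F⁻f)(n) = (1/2)(1+(−1)^{n})·f(n+1), (Q⁺f)(n) = (1/2)(1+(−1)^{n})·√(n/2)·f(n−1), (Q⁻f)(n) = (1/2)(1−(−1)^{n})·√((n+1)/2)·f(n+1), with terms of index −1 omitted, and the diagonal operator (Hf)(n) = (n/2 + (1−(−1)^n)/4)·f(n). Then the following anticommutation relations hold as operator identities on all sequences f: {F⁺,F⁺} = {F⁻,F⁻} = {Q⁺,Q⁺} = {Q⁻,Q⁻} = 0, {F⁺,F⁻} = Id, {Q⁺,Q⁻} = H, {F⁺,Q⁻} = {F⁻,Q⁺} = 0, where {A,B} = AB + BA. -/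
import Mathlib


/-- `(F⁺f)(n) = (1/2)(1+(-1)^{n-1})·f(n-1)`, term with index `-1` omitted. -/
noncomputable def Fp (f : ℕ → ℂ) (n : ℕ) : ℂ :=
  if n = 0 then 0 else (1 / 2) * (1 + (-1 : ℂ) ^ (n - 1)) * f (n - 1)

/-- `(F⁻f)(n) = (1/2)(1+(-1)^n)·f(n+1)`. -/
noncomputable def Fm (f : ℕ → ℂ) (n : ℕ) : ℂ :=
  (1 / 2) * (1 + (-1 : ℂ) ^ n) * f (n + 1)

/-- `(Q⁺f)(n) = (1/2)(1+(-1)^n)·√(n/2)·f(n-1)`, term with index `-1` omitted. -/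
noncomputable def Qp (f : ℕ → ℂ) (n : ℕ) : ℂ :=
  if n = 0 then 0 else
    (1 / 2) * (1 + (-1 : ℂ) ^ n) * ((Real.sqrt ((n : ℝ) / 2) : ℝ) : ℂ) * f (n - 1)

/-- `(Q⁻f)(n) = (1/2)(1-(-1)^n)·√((n+1)/2)·f(n+1)`. -/
noncomputable def Qm (f : ℕ → ℂ) (n : ℕ) : ℂ :=
  (1 / 2) * (1 - (-1 : ℂ) ^ n) * ((Real.sqrt (((n : ℝ) + 1) / 2) : ℝ) : ℂ) * f (n + 1)

/-- `(Hf)(n) = (n/2 + (1-(-1)^n)/4)·f(n)`. -/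
noncomputable def Hdiag (f : ℕ → ℂ) (n : ℕ) : ℂ :=
  ((n : ℂ) / 2 + (1 - (-1 : ℂ) ^ n) / 4) * f n

/-- Anticommutation relations of the odd generators of the Lie superalgebra
`S ⊂ U(sh(2|2))` in the Fock representation:
`{F⁺,F⁺} = {F⁻,F⁻} = {Q⁺,Q⁺} = {Q⁻,Q⁻} = 0`, `{F⁺,F⁻} = Id`, `{Q⁺,Q⁻} = H`,
`{F⁺,Q⁻} = {F⁻,Q⁺} = 0`. -/
theorem odd_anticommutation_relations :
    ∀ (f : ℕ → ℂ) (n : ℕ),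
      Fp (Fp f) n + Fp (Fp f) n = 0 ∧
      Fm (Fm f) n + Fm (Fm f) n = 0 ∧
      Qp (Qp f) n + Qp (Qp f) n = 0 ∧
      Qm (Qm f) n + Qm (Qm f) n = 0 ∧
      Fp (Fm f) n + Fm (Fp f) n = f n ∧
      Qp (Qm f) n + Qm (Qp f) n = Hdiag f n ∧
      Fp (Qm f) n + Qm (Fp f) n = 0 ∧
      Fm (Qp f) n + Qp (Fm f) n = 0 := by
  intro f n
  have hsq : ∀ m : ℕ, ((Real.sqrt ((m : ℝ) + 1) : ℝ) : ℂ) *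
      ((Real.sqrt ((m : ℝ) + 1) : ℝ) : ℂ) = ((m : ℂ) + 1) := by
    intro m
    rw [← Complex.ofReal_mul, Real.mul_self_sqrt (by positivity)]
    push_cast
    ring
  rcases Nat.even_or_odd n with ⟨m, hm⟩ | ⟨m, hm⟩
  · rcases m with _ | m
    · subst hm
      simp [Fp, Fm, Qp, Qm, Hdiag, pow_succ]
      ring
    · have hn : n = 2 * m + 2 := by omega
      subst hn
      have h1 : 2 * m + 2 - 1 = 2 * m + 1 := by omega
      have h2 : 2 * m + 1 - 1 = 2 * m := by omega
      have h4 : 2 * m + 3 - 1 = 2 * m + 2 := by omega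
      have e1 : ((-1 : ℂ)) ^ (2 * m) = 1 := by rw [pow_mul]; norm_num
      have e2 : ((-1 : ℂ)) ^ (2 * m + 1) = -1 := by rw [pow_succ, e1]; ring
      have e3 : ((-1 : ℂ)) ^ (2 * m + 2) = 1 := by rw [pow_succ, e2]; ring
      have e4 : ((-1 : ℂ)) ^ (2 * m + 3) = -1 := by rw [pow_succ, e3]; ring
      have sA : ((2 * m + 2 : ℕ) : ℝ) / 2 = (m : ℝ) + 1 := by push_cast; ring
      have sB : (((2 * m + 1 : ℕ) : ℝ) + 1) / 2 = (m : ℝ) + 1 := by push_cast; ring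
      have hQ := hsq m
      refine ⟨?_, ?_, ?_, ?_, ?_, ?_, ?_, ?_⟩ <;>
        simp only [Fp, Fm, Qp, Qm, Hdiag, show 2 * m + 1 + 1 = 2 * m + 2 from rfl,
          show 2 * m + 2 + 1 = 2 * m + 3 from rfl, h1, h2, h4,
          if_neg (by omega : ¬ 2 * m + 2 = 0), if_neg (by omega : ¬ 2 * m + 1 = 0),
          if_neg (by omega : ¬ 2 * m + 3 = 0), e1, e2, e3, e4, sA, sB] <;>
        push_cast <;> try ring1
      · linear_combination (f (2 * m + 2)) * hQ
  · have hn : n = 2 * m + 1 := by omega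
    subst hn
    have h1 : 2 * m + 2 - 1 = 2 * m + 1 := by omega
    have h2 : 2 * m + 1 - 1 = 2 * m := by omega
    have e1 : ((-1 : ℂ)) ^ (2 * m) = 1 := by rw [pow_mul]; norm_num
    have e2 : ((-1 : ℂ)) ^ (2 * m + 1) = -1 := by rw [pow_succ, e1]; ring
    have e3 : ((-1 : ℂ)) ^ (2 * m + 2) = 1 := by rw [pow_succ, e2]; ring
    have sA : ((2 * m + 2 : ℕ) : ℝ) / 2 = (m : ℝ) + 1 := by push_cast; ring
    have sB : (((2 * m + 1 : ℕ) : ℝ) + 1) / 2 = (m : ℝ) + 1 := by push_cast; ring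
    have hQ := hsq m
    have hQ1 : ((Real.sqrt 1 : ℝ) : ℂ) * ((Real.sqrt 1 : ℝ) : ℂ) = 1 := by
      rw [Real.sqrt_one]; norm_num
    rcases Nat.eq_zero_or_pos m with rfl | hm0
    · refine ⟨?_, ?_, ?_, ?_, ?_, ?_, ?_, ?_⟩ <;>
        simp only [Fp, Fm, Qp, Qm, Hdiag, h1, h2, e1, e2, e3, sA, sB,
          if_neg (one_ne_zero), if_neg (two_ne_zero), if_pos rfl,
          show (1:ℕ) + 1 = 2 from rfl, show (2:ℕ) - 1 = 1 from rfl,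
          show (1:ℕ) - 1 = 0 from rfl] <;>
        push_cast <;> try ring1
      · rw [show ((0:ℝ) + 1) = 1 by norm_num, Real.sqrt_one]
        push_cast
        ring
    · have e0 : ((-1 : ℂ)) ^ (2 * m - 1) = -1 := by
        have : 2 * m - 1 = 2 * (m - 1) + 1 := by omega
        rw [this, pow_succ, pow_mul]; norm_num
      have h3 : 2 * m - 1 + 1 = 2 * m := by omega
      have sE : ((2 * m : ℕ) : ℝ) / 2 = (m : ℝ) := by push_cast; ring
      have sF : (((2 * m : ℕ) : ℝ) + 1) / 2 = ((m : ℝ) - 1) + 1 + 1 / 2 := by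
        push_cast; ring
      refine ⟨?_, ?_, ?_, ?_, ?_, ?_, ?_, ?_⟩ <;>
        simp only [Fp, Fm, Qp, Qm, Hdiag, h1, h2, h3, if_neg (by omega : ¬ 2 * m + 2 = 0),
          if_neg (by omega : ¬ 2 * m + 1 = 0), if_neg (by omega : ¬ 2 * m = 0),
          show 2 * m + 1 + 1 = 2 * m + 2 from rfl, e0, e1, e2, e3, sA, sB, sE, sF] <;>
        push_cast <;> try ring1
      · linear_combination (f (2 * m + 1)) * hQ
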